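/- Let B be a finite Blaschke product of degree d ≥ 1, i.e. B(z) = λ ∏_{k=1}^{d} (z − a_k)/(1 − conj(a_k) z) with |λ| = 1 and a_1, …, a_d ∈ 𝔻. Let h be a Möbius transformation of the Riemann sphere with h(𝔻) = 𝔻 and h(1) = 1, and suppose B(h(z)) = B(z) for all z ∈ 𝔻. Then h is the identity map. -/

import Mathlib

/-!
At the boundary point `1` the Blaschke product has derivative
`B'(1) = B(1) · ∑ₖ (1 - |aₖ|²) / |1 - aₖ|²`, which is nonzero since every term is positive,
so by the inverse function theorem `B` is injective near `1`. Since `h` is continuous at `1` and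
fixes it, `z` and `h z` both lie in that neighbourhood for `z ∈ 𝔻` close to `1`, so
`B (h z) = B z` forces `h z = z` there. A Möbius map with infinitely many fixed points is the
identity.
-/

open Metric Set Filter Topology ComplexConjugate Polynomial

theorem HasStrictDerivAt.eventually_eq_of_comp_eventuallyEq {𝕜 : Type*}
    [NontriviallyNormedField 𝕜] [CompleteSpace 𝕜] {f g : 𝕜 → 𝕜} {f' x : 𝕜} {l : Filter 𝕜}
    (hf : HasStrictDerivAt f f' x) (hf' : f' ≠ 0) (hl : l ≤ 𝓝 x) (hg : Tendsto g l (𝓝 x))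
    (hfg : ∀ᶠ z in l, f (g z) = f z) : ∀ᶠ z in l, g z = z := by
  have hinv := hf.eventually_left_inverse hf'
  filter_upwards [hl hinv, hg.eventually hinv, hfg] with z hz hgz hfgz
  rw [← hgz, hfgz, hz]

theorem HasStrictDerivAt.finsetProd_of_eq_mul {𝕜 ι : Type*} [NontriviallyNormedField 𝕜]
    [DecidableEq ι]
    {u : Finset ι} {f : ι → 𝕜 → 𝕜} {c : ι → 𝕜} {x : 𝕜}
    (hf : ∀ i ∈ u, HasStrictDerivAt (f i) (f i x * c i) x) :
    HasStrictDerivAt (fun z ↦ ∏ i ∈ u, f i z) ((∏ i ∈ u, f i x) * ∑ i ∈ u, c i) x := by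
  refine (HasStrictDerivAt.fun_finsetProd hf).congr_deriv ?_
  rw [Finset.mul_sum]
  refine Finset.sum_congr rfl fun i hi ↦ ?_
  rw [smul_eq_mul, ← mul_assoc, Finset.prod_erase_mul _ _ hi]

theorem Set.Infinite.of_eventually_nhdsWithin {X : Type*} [TopologicalSpace X] [T1Space X]
    {s : Set X} {x : X} (hx : x ∈ closure s) (hxs : x ∉ s) {P : X → Prop}
    (hP : ∀ᶠ z in 𝓝[s] x, P z) : {z | P z}.Infinite := by
  have := mem_closure_iff_nhdsWithin_neBot.1 hx
  have hle : 𝓝[s] x ≤ cofinite :=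
    (nhdsWithin_mono x (subset_compl_singleton_iff.2 hxs)).trans (nhdsNE_le_cofinite x)
  exact frequently_cofinite_iff_infinite.1 (hP.frequently.filter_mono hle)

theorem mobius_eq_id_of_infinite_fixedPoints {p q r s : ℂ}
    (hfix : {z : ℂ | (p * z + q) / (r * z + s) = z}.Infinite) (z : ℂ) :
    (p * z + q) / (r * z + s) = z := by
  set P : ℂ[X] := C r * X ^ 2 + C (s - p) * X - C q
  have hP : P = 0 := by
    refine P.eq_zero_of_infinite_isRoot ((hfix.sdiff (finite_singleton 0)).mono ?_)
    rintro w ⟨hw, hw0 : w ≠ 0⟩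
    -- with the convention `x / 0 = 0`, a pole can only be a fixed point if it is `0`
    have hden : r * w + s ≠ 0 := fun h0 ↦ hw0 (by rw [← hw.out, h0, div_zero])
    have := (div_eq_iff hden).1 hw.out
    simp only [mem_ofPred_eq, IsRoot, P, eval_sub, eval_add, eval_mul, eval_C, eval_pow, eval_X]
    linear_combination -this
  have hr : r = 0 := by simpa [P] using congrArg (coeff · 2) hP
  have hps : s - p = 0 := by simpa [P] using congrArg (coeff · 1) hP
  have hq : q = 0 := by simpa [P] using congrArg (coeff · 0) hP
  subst hr hq
  obtain rfl : s = p := sub_eq_zero.1 hps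
  have hs : s ≠ 0 := by
    rintro rfl
    exact hfix ((finite_singleton 0).subset fun w hw ↦ by simpa [eq_comm] using hw)
  simp [hs]

lemma one_sub_ne_zero_of_norm_lt_one {a : ℂ} (ha : ‖a‖ < 1) : 1 - a ≠ 0 :=
  sub_ne_zero.2 fun h ↦ by simp [← h] at ha

noncomputable def blaschkeFactor (a z : ℂ) : ℂ := (z - a) / (1 - conj a * z)

lemma one_sub_conj_mul_ne_zero {a z : ℂ} (ha : ‖a‖ < 1) (hz : ‖z‖ ≤ 1) : 1 - conj a * z ≠ 0 := by
  refine sub_ne_zero.2 fun h ↦ ?_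
  have : ‖conj a * z‖ < 1 := by
    rw [norm_mul, Complex.norm_conj]
    nlinarith [norm_nonneg a, norm_nonneg z]
  simp [← h] at this

theorem hasStrictDerivAt_blaschkeFactor {a z : ℂ} (hz : 1 - conj a * z ≠ 0) :
    HasStrictDerivAt (blaschkeFactor a) ((1 - ‖a‖ ^ 2) / (1 - conj a * z) ^ 2) z := by
  have := HasStrictDerivAt.div ((hasStrictDerivAt_id z).sub_const a)
    (((hasStrictDerivAt_id z).const_mul (conj a)).const_sub 1) hz
  refine HasStrictDerivAt.congr_deriv (f := blaschkeFactor a) this ?_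
  rw [← Complex.mul_conj', id]
  ring

theorem hasStrictDerivAt_blaschkeFactor_one {a : ℂ} (ha : ‖a‖ < 1) :
    HasStrictDerivAt (blaschkeFactor a)
      (blaschkeFactor a 1 * ((1 - ‖a‖ ^ 2) / ‖1 - a‖ ^ 2 : ℝ)) 1 := by
  have hden := one_sub_conj_mul_ne_zero ha (norm_one (α := ℂ)).le
  have ha1 := one_sub_ne_zero_of_norm_lt_one ha
  convert hasStrictDerivAt_blaschkeFactor hden using 1
  rw [mul_one] at hden
  simp only [blaschkeFactor, mul_one]
  push_cast
  rw [← Complex.mul_conj' (1 - a), map_sub, map_one]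
  field_simp

theorem blaschkeFactor_one_ne_zero {a : ℂ} (ha : ‖a‖ < 1) : blaschkeFactor a 1 ≠ 0 :=
  div_ne_zero (one_sub_ne_zero_of_norm_lt_one ha)
    (one_sub_conj_mul_ne_zero ha (norm_one (α := ℂ)).le)

section

variable {ι : Type*} [Fintype ι] {a : ι → ℂ}

theorem hasStrictDerivAt_prod_blaschkeFactor_one [DecidableEq ι] (ha : ∀ k, ‖a k‖ < 1) :
    HasStrictDerivAt (fun z ↦ ∏ k, blaschkeFactor (a k) z)
      ((∏ k, blaschkeFactor (a k) 1) * ∑ k, (((1 - ‖a k‖ ^ 2) / ‖1 - a k‖ ^ 2 : ℝ) : ℂ)) 1 :=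
  HasStrictDerivAt.finsetProd_of_eq_mul fun k _ ↦ hasStrictDerivAt_blaschkeFactor_one (ha k)

theorem prod_blaschkeFactor_one_mul_sum_ne_zero [Nonempty ι] (ha : ∀ k, ‖a k‖ < 1) :
    (∏ k, blaschkeFactor (a k) 1) * ∑ k, (((1 - ‖a k‖ ^ 2) / ‖1 - a k‖ ^ 2 : ℝ) : ℂ) ≠ 0 := by
  refine mul_ne_zero (Finset.prod_ne_zero_iff.2 fun k _ ↦ blaschkeFactor_one_ne_zero (ha k)) ?_
  rw [← Complex.ofReal_sum, Complex.ofReal_ne_zero]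
  refine (Finset.sum_pos (fun k _ ↦ div_pos ?_ ?_) Finset.univ_nonempty).ne'
  · nlinarith [ha k, norm_nonneg (a k)]
  · exact pow_pos (norm_pos_iff.2 (one_sub_ne_zero_of_norm_lt_one (ha k))) 2

end

theorem blaschke_no_nontrivial_symmetry_general
    (d : ℕ) (hd : 1 ≤ d) (lam : ℂ) (hlam : ‖lam‖ = 1)
    (a : Fin d → ℂ) (ha : ∀ k, ‖a k‖ < 1)
    (B : ℂ → ℂ)
    (hB : ∀ z, B z = lam * ∏ k, (z - a k) / (1 - (starRingEnd ℂ) (a k) * z))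
    (p q r s : ℂ)
    (h : ℂ → ℂ) (hh : ∀ z, h z = (p * z + q) / (r * z + s))
    (hone : h 1 = 1)
    (hconj : ∀ z ∈ Metric.ball (0 : ℂ) 1, B (h z) = B z) :
    ∀ z : ℂ, h z = z := by
  have : Nonempty (Fin d) := ⟨⟨0, hd⟩⟩
  have hlam0 : lam ≠ 0 := norm_ne_zero_iff.1 (hlam ▸ one_ne_zero)
  have hB' : B = fun z ↦ lam * ∏ k, blaschkeFactor (a k) z := funext hB
  have hBder := hB' ▸ (hasStrictDerivAt_prod_blaschkeFactor_one ha).const_mul lam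
  have hrs : r * 1 + s ≠ 0 := fun h0 ↦ by
    rw [hh, h0, div_zero] at hone
    exact zero_ne_one hone
  have hcont : ContinuousAt h 1 := by
    rw [funext hh]
    exact ContinuousAt.div (by fun_prop) (by fun_prop) hrs
  have hh1 : Tendsto h (𝓝 1) (𝓝 1) := by simpa only [ContinuousAt, hone] using hcont
  have hfix : ∀ᶠ z in 𝓝[ball 0 1] 1, h z = z :=
    hBder.eventually_eq_of_comp_eventuallyEq
      (mul_ne_zero hlam0 (prod_blaschkeFactor_one_mul_sum_ne_zero ha))
      nhdsWithin_le_nhds (hh1.mono_left nhdsWithin_le_nhds)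
      (eventually_nhdsWithin_of_forall hconj)
  have hinf := Set.Infinite.of_eventually_nhdsWithin (by simp [closure_ball]) (by simp) hfix
  simp only [hh] at hinf ⊢
  exact mobius_eq_id_of_infinite_fixedPoints hinf

/-- Let `B` be a finite Blaschke product of degree `d ≥ 1`,
`B(z) = λ ∏_{k=1}^d (z - a k)/(1 - conj (a k) z)` with `|λ| = 1`, `a k ∈ 𝔻`. If `h` is a
Möbius transformation with `h(𝔻) = 𝔻`, `h 1 = 1` and `B ∘ h = B` on `𝔻`, then `h` is the
identity. -/
theorem blaschke_no_nontrivial_symmetry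
    (d : ℕ) (hd : 1 ≤ d) (lam : ℂ) (hlam : ‖lam‖ = 1)
    (a : Fin d → ℂ) (ha : ∀ k, ‖a k‖ < 1)
    (B : ℂ → ℂ)
    (hB : ∀ z, B z = lam * ∏ k, (z - a k) / (1 - (starRingEnd ℂ) (a k) * z))
    (p q r s : ℂ) (hdet : p * s - q * r ≠ 0)
    (h : ℂ → ℂ) (hh : ∀ z, h z = (p * z + q) / (r * z + s))
    (hdisk : h '' Metric.ball (0 : ℂ) 1 = Metric.ball (0 : ℂ) 1)
    (hone : h 1 = 1)
    (hconj : ∀ z ∈ Metric.ball (0 : ℂ) 1, B (h z) = B z) :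
    ∀ z : ℂ, h z = z :=
  blaschke_no_nontrivial_symmetry_general d hd lam hlam a ha B hB p q r s h hh hone hconj
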